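/- Assume p ∈ (1,N) and that there exists a nonincreasing function φ : [0,∞) → [0,∞) with φ ≤ f ≤ (N/(N−p))·φ on [0,∞). Then for every t ∈ (0,M) one has W(t) ≥ ((N−p)/N)·φ₀·|Ω|^{(p−N)/(N(p−1))} > 0. -/

import Mathlib

open MeasureTheory Metric Set
open scoped ENNReal NNReal RealInnerProductSpace

noncomputable section

namespace GNN

/-- The surface measure: the `(N-1)`-dimensional Hausdorff measure on `ℝ^N`. -/
def sm (N : ℕ) : Measure (EuclideanSpace ℝ (Fin N)) :=
  Measure.hausdorffMeasure ((N : ℝ) - 1)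

/-- `Ω` has boundary of class `C²`: near every boundary point, `Ω` is the sublevel set
of a `C²` function with nonvanishing differential. -/
def IsC2Domain {N : ℕ} (Ω : Set (EuclideanSpace ℝ (Fin N))) : Prop :=
  ∀ x ∈ frontier Ω, ∃ (U : Set (EuclideanSpace ℝ (Fin N))) (φ : EuclideanSpace ℝ (Fin N) → ℝ),
    IsOpen U ∧ x ∈ U ∧ ContDiffOn ℝ 2 φ U ∧ (∀ y ∈ U, fderiv ℝ φ y ≠ 0) ∧
    Ω ∩ U = {y | y ∈ U ∧ φ y < 0}

/-- `u` is a weak solution of `-Δ_p u = f(u)` in `Ω`. -/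
def IsWeakPSolution {N : ℕ} (p : ℝ) (Ω : Set (EuclideanSpace ℝ (Fin N)))
    (f : ℝ → ℝ) (u : EuclideanSpace ℝ (Fin N) → ℝ) : Prop :=
  ∀ ψ : EuclideanSpace ℝ (Fin N) → ℝ,
    ContDiff ℝ (⊤ : ℕ∞) ψ → HasCompactSupport ψ → tsupport ψ ⊆ Ω →
      ∫ x in Ω, ‖gradient u x‖ ^ (p - 2) * ⟪gradient u x, gradient ψ x⟫
        = ∫ x in Ω, f (u x) * ψ x

/-- `f` is locally Lipschitz continuous on `[0,∞)`. -/
def LocLipschitzOnNonneg (f : ℝ → ℝ) : Prop :=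
  ∀ R : ℝ, 0 < R → ∃ L : ℝ≥0, LipschitzOnWith L f (Icc 0 R)

/-- `u ∈ C^{1,γ}(closure Ω)` for some `γ ∈ (0,1)`. -/
def C1HolderOn {N : ℕ} (Ω : Set (EuclideanSpace ℝ (Fin N)))
    (u : EuclideanSpace ℝ (Fin N) → ℝ) : Prop :=
  ContDiffOn ℝ 1 u (closure Ω) ∧
    ∃ (γ C : ℝ≥0), 0 < γ ∧ γ < 1 ∧ HolderOnWith C γ (fun x => gradient u x) (closure Ω)

/-- Assumption (a) or (b): either `p ∈ (1,N)` and `φ ≤ f ≤ (N/(N-p))·φ` for some nonnegative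
nonincreasing `φ`, or `p ≥ N`. -/
def DichotomyAB (N : ℕ) (p : ℝ) (f : ℝ → ℝ) : Prop :=
  (p < N ∧ ∃ φ : ℝ → ℝ, AntitoneOn φ (Ici 0) ∧ ∀ s : ℝ, 0 ≤ s →
      0 ≤ φ s ∧ φ s ≤ f s ∧ f s ≤ ((N : ℝ) / (N - p)) * φ s) ∨ (N : ℝ) ≤ p

/-- The distribution function `μ(t) = |{u > t}|`. -/
def mu {N : ℕ} (u : EuclideanSpace ℝ (Fin N) → ℝ) (t : ℝ) : ℝ :=
  (volume {x | t < u x}).toReal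

/-- `I(t) = ∫_{{u>t}} f(u)`. -/
def Iint {N : ℕ} (f : ℝ → ℝ) (u : EuclideanSpace ℝ (Fin N) → ℝ) (t : ℝ) : ℝ :=
  ∫ x in {x | t < u x}, f (u x)

/-- The function `W(t)`. -/
def W (N : ℕ) (p : ℝ) (f : ℝ → ℝ) (u : EuclideanSpace ℝ (Fin N) → ℝ) (t : ℝ) : ℝ :=
  (p / (p - 1)) * mu u t ^ ((p - N) / (N * (p - 1))) * f t +
    ((p - N) / (N * (p - 1))) * Iint f u t * mu u t ^ ((p - p * N) / (N * (p - 1)))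

/-- The sharp isoperimetric constant `c_N`. -/
def cIso (N : ℕ) : ℝ :=
  (sm N (sphere (0 : EuclideanSpace ℝ (Fin N)) 1)).toReal /
    (volume (ball (0 : EuclideanSpace ℝ (Fin N)) 1)).toReal ^ (((N : ℝ) - 1) / N)

/-- The level set `{u = t}`. -/
def lev {N : ℕ} (u : EuclideanSpace ℝ (Fin N) → ℝ) (t : ℝ) : Set (EuclideanSpace ℝ (Fin N)) :=
  {x | u x = t}

/-- The set of regular (non-critical) points of `u`. -/
def reg {N : ℕ} (u : EuclideanSpace ℝ (Fin N) → ℝ) : Set (EuclideanSpace ℝ (Fin N)) :=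
  {x | gradient u x ≠ 0}

/-- `∫_{{u=t}} |∇u|^{p-1} dH^{N-1}`. -/
def levP {N : ℕ} (p : ℝ) (u : EuclideanSpace ℝ (Fin N) → ℝ) (t : ℝ) : ℝ :=
  ∫ x in lev u t, ‖gradient u x‖ ^ (p - 1) ∂(sm N)

/-- `∫_{{u=t}} |∇u|^{-1} dH^{N-1}` (over the regular part of the level set). -/
def levInv {N : ℕ} (u : EuclideanSpace ℝ (Fin N) → ℝ) (t : ℝ) : ℝ :=
  ∫ x in lev u t ∩ reg u, ‖gradient u x‖⁻¹ ∂(sm N)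

/-- `H^{N-1}({u = t})`. -/
def per {N : ℕ} (u : EuclideanSpace ℝ (Fin N) → ℝ) (t : ℝ) : ℝ :=
  (sm N (lev u t)).toReal

/-- The deficit `D₁(t)`. -/
def D1 {N : ℕ} (p : ℝ) (u : EuclideanSpace ℝ (Fin N) → ℝ) (t : ℝ) : ℝ :=
  levP p u t ^ (1 / (p - 1)) * levInv u t - per u t ^ (p / (p - 1))

/-- The deficit `D₂(t)`. -/
def D2 {N : ℕ} (p : ℝ) (u : EuclideanSpace ℝ (Fin N) → ℝ) (t : ℝ) : ℝ :=
  per u t ^ (p / (p - 1)) - (cIso N * mu u t ^ (((N : ℝ) - 1) / N)) ^ (p / (p - 1))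

/-- The deficit `D₃`. -/
def D3 {N : ℕ} (p : ℝ) (Ω : Set (EuclideanSpace ℝ (Fin N)))
    (u : EuclideanSpace ℝ (Fin N) → ℝ) : ℝ :=
  (∫ x in frontier Ω, ‖gradient u x‖ ^ p ∂(sm N)) -
    (∫ x in frontier Ω, ‖gradient u x‖ ^ (p - 1) ∂(sm N)) ^ (p / (p - 1)) /
      (sm N (frontier Ω)).toReal ^ (1 / (p - 1))

/-- The deficit `D₄`. -/
def D4 {N : ℕ} (p : ℝ) (Ω : Set (EuclideanSpace ℝ (Fin N))) : ℝ :=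
  (sm N (frontier Ω)).toReal ^ (p / (p - 1)) /
    (cIso N * (volume Ω).toReal ^ (((N : ℝ) - 1) / N)) ^ (p / (p - 1)) - 1

/-- The constant `C_Ω = N|Ω|/H^{N-1}(∂Ω)`. -/
def COm {N : ℕ} (Ω : Set (EuclideanSpace ℝ (Fin N))) : ℝ :=
  N * (volume Ω).toReal / (sm N (frontier Ω)).toReal

/-- The deficit `D₅(x₀)`. -/
def D5 {N : ℕ} (p : ℝ) (Ω : Set (EuclideanSpace ℝ (Fin N)))
    (u : EuclideanSpace ℝ (Fin N) → ℝ)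
    (ν : EuclideanSpace ℝ (Fin N) → EuclideanSpace ℝ (Fin N))
    (x₀ : EuclideanSpace ℝ (Fin N)) : ℝ :=
  ∫ x in frontier Ω, (COm Ω - ⟪x - x₀, ν x⟫) * ‖gradient u x‖ ^ p ∂(sm N)

/-- The isoperimetric deficit `D(Ω)`. -/
def isoDef {N : ℕ} (Ω : Set (EuclideanSpace ℝ (Fin N))) : ℝ :=
  ((sm N (frontier Ω)).toReal - cIso N * (volume Ω).toReal ^ (((N : ℝ) - 1) / N)) /
    (cIso N * (volume Ω).toReal ^ (((N : ℝ) - 1) / N))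

/-- The deficit `ε`. -/
def eps {N : ℕ} (Ω : Set (EuclideanSpace ℝ (Fin N)))
    (ν : EuclideanSpace ℝ (Fin N) → EuclideanSpace ℝ (Fin N)) : ℝ :=
  isoDef Ω + ⨅ x₀ : EuclideanSpace ℝ (Fin N),
    ∫ x in frontier Ω, |COm Ω - ⟪x - x₀, ν x⟫| ∂(sm N)

/-- `t_{α,ε} = sup{t > 0 : μ(t) > ε^{αN'}}`. -/
def talpha {N : ℕ} (u : EuclideanSpace ℝ (Fin N) → ℝ) (α ε : ℝ) : ℝ :=
  sSup {t : ℝ | 0 < t ∧ ε ^ (α * ((N : ℝ) / ((N : ℝ) - 1))) < mu u t}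

/-- The isoperimetric deficit `D(t)` of the super-level set `{u > t}`. -/
def levDef {N : ℕ} (u : EuclideanSpace ℝ (Fin N) → ℝ) (t : ℝ) : ℝ :=
  (per u t - cIso N * mu u t ^ (((N : ℝ) - 1) / N)) /
    (cIso N * mu u t ^ (((N : ℝ) - 1) / N))

/-- `β_t`. -/
def betat {N : ℕ} (p : ℝ) (u : EuclideanSpace ℝ (Fin N) → ℝ) (t : ℝ) : ℝ :=
  (⨍ x in lev u t ∩ reg u, ‖gradient u x‖⁻¹ ∂(sm N)) ^ ((p - 1) / p) /
    (⨍ x in lev u t, ‖gradient u x‖ ^ (p - 1) ∂(sm N)) ^ (1 / (p * (p - 1)))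

/-- `R_t = (μ(t)/ω_N)^{1/N}`. -/
def Rt {N : ℕ} (u : EuclideanSpace ℝ (Fin N) → ℝ) (t : ℝ) : ℝ :=
  (mu u t / (volume (ball (0 : EuclideanSpace ℝ (Fin N)) 1)).toReal) ^ ((1 : ℝ) / N)

/-- `‖∇u‖_{L^p(Ω)}`. -/
def gradLp {N : ℕ} (p : ℝ) (Ω : Set (EuclideanSpace ℝ (Fin N)))
    (u : EuclideanSpace ℝ (Fin N) → ℝ) : ℝ :=
  (∫ x in Ω, ‖gradient u x‖ ^ p) ^ (1 / p)

/-- `δ₋(E)`. -/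
def deltaMinus {N : ℕ} (Ω E : Set (EuclideanSpace ℝ (Fin N))) : ℝ :=
  sInf ((fun x => infDist x (frontier Ω)) '' E)

/-- `δ₊(E)`. -/
def deltaPlus {N : ℕ} (Ω E : Set (EuclideanSpace ℝ (Fin N))) : ℝ :=
  sSup ((fun x => infDist x (frontier Ω)) '' E)

/-- `𝒱(δ)`, the volume of the inner `δ`-tube around `∂Ω`. -/
def tube {N : ℕ} (Ω : Set (EuclideanSpace ℝ (Fin N))) (δ : ℝ) : ℝ :=
  (volume {x | x ∈ Ω ∧ infDist x (frontier Ω) ≤ δ}).toReal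

/-- The Schwarz rearrangement `u*`. -/
def schwarz {N : ℕ} (u : EuclideanSpace ℝ (Fin N) → ℝ) (x : EuclideanSpace ℝ (Fin N)) : ℝ :=
  sSup {t : ℝ | 0 < t ∧
    (volume (ball (0 : EuclideanSpace ℝ (Fin N)) 1)).toReal * ‖x‖ ^ (N : ℝ) < mu u t}

/-- Lower bound for `W` when `1 < p < N`. -/
theorem statement6
    (N : ℕ) (hN : 2 ≤ N) (p : ℝ) (hp : 1 < p)
    (Ω : Set (EuclideanSpace ℝ (Fin N)))
    (hΩne : Ω.Nonempty) (hΩop : IsOpen Ω) (hΩconn : IsConnected Ω)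
    (hΩbd : Bornology.IsBounded Ω) (hΩC2 : IsC2Domain Ω)
    (φ₀ : ℝ) (hφ₀ : 0 < φ₀)
    (f : ℝ → ℝ) (hf : LocLipschitzOnNonneg f)
    (hfnn : ∀ s : ℝ, 0 ≤ s → 0 ≤ f s) (hfφ₀ : ∀ s : ℝ, 0 ≤ s → φ₀ < f s)
    (u : EuclideanSpace ℝ (Fin N) → ℝ)
    (hu0 : ∀ x ∉ Ω, u x = 0) (hupos : ∀ x ∈ Ω, 0 < u x)
    (hureg : C1HolderOn Ω u)
    (hweak : IsWeakPSolution p Ω f u)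
    (M : ℝ) (hM : IsGreatest (u '' closure Ω) M)
    (hpN : p < N)
    (φ : ℝ → ℝ) (hφmono : AntitoneOn φ (Ici 0)) (hφnn : ∀ s : ℝ, 0 ≤ s → 0 ≤ φ s)
    (hφf : ∀ s : ℝ, 0 ≤ s → φ s ≤ f s ∧ f s ≤ ((N : ℝ) / (N - p)) * φ s) :
    ∀ t ∈ Ioo (0:ℝ) M,
      (((N : ℝ) - p) / N) * φ₀ * (volume Ω).toReal ^ ((p - N) / (N * (p - 1))) ≤ W N p f u t ∧
      0 < (((N : ℝ) - p) / N) * φ₀ * (volume Ω).toReal ^ ((p - N) / (N * (p - 1))) := by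
  intro t ht
  obtain ⟨ht0, htM⟩ := ht
  have hN0 : (0:ℝ) < N := by positivity
  have hNp : (0:ℝ) < (N:ℝ) - p := by linarith
  have hp1 : (0:ℝ) < p - 1 := by linarith
  -- volume of Ω
  have hΩfin : volume Ω < ⊤ := hΩbd.measure_lt_top
  have hΩvolpos : 0 < (volume Ω).toReal :=
    ENNReal.toReal_pos (hΩop.measure_pos volume hΩne).ne' hΩfin.ne
  set a : ℝ := (p - N) / (N * (p - 1)) with ha
  set b : ℝ := (p - p * N) / (N * (p - 1)) with hb
  set S : Set (EuclideanSpace ℝ (Fin N)) := {x | t < u x} with hS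
  -- S ⊆ Ω
  have hSΩ : S ⊆ Ω := by
    intro x hx
    by_contra hxΩ
    have h0 := hu0 x hxΩ
    have hx' : t < u x := hx
    rw [h0] at hx'
    linarith
  -- S is open
  have hucont : ContinuousOn u (closure Ω) := hureg.1.continuousOn
  have hSopen : IsOpen S := by
    have h1 : IsOpen (Ω ∩ u ⁻¹' Ioi t) :=
      (hucont.mono subset_closure).isOpen_inter_preimage hΩop isOpen_Ioi
    have h2 : S = Ω ∩ u ⁻¹' Ioi t := by
      ext x
      constructor
      · intro hx; exact ⟨hSΩ hx, hx⟩
      · intro hx; exact hx.2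
    rw [h2]; exact h1
  have hSmeas : MeasurableSet S := hSopen.measurableSet
  -- S is nonempty
  have hSne : S.Nonempty := by
    obtain ⟨x₀, hx₀cl, hx₀M⟩ := hM.1
    refine ⟨x₀, ?_⟩
    show t < u x₀
    rw [hx₀M]; exact htM
  -- μ(t) > 0
  have hSfin : volume S < ⊤ := lt_of_le_of_lt (measure_mono hSΩ) hΩfin
  have hμpos : 0 < mu u t :=
    ENNReal.toReal_pos (by simpa [mu, hS] using (hSopen.measure_pos volume hSne).ne') hSfin.ne
  have hμle : mu u t ≤ (volume Ω).toReal :=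
    ENNReal.toReal_mono hΩfin.ne (measure_mono hSΩ)
  set μt := mu u t with hμt
  -- bound on f on S
  have hφt0 : 0 ≤ φ t := hφnn t ht0.le
  have hft0 : 0 ≤ f t := hfnn t ht0.le
  set c : ℝ := ((N:ℝ) / (N - p)) * φ t with hcdef
  have hc0 : 0 ≤ c := by
    apply mul_nonneg _ hφt0
    positivity
  have hbound : ∀ x ∈ S, f (u x) ≤ c := by
    intro x hx
    have hux : t < u x := hx
    have hux0 : (0:ℝ) ≤ u x := le_of_lt (lt_trans ht0 hux)
    have h1 := (hφf (u x) hux0).2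
    have h2 : φ (u x) ≤ φ t := hφmono (mem_Ici.2 ht0.le) (mem_Ici.2 hux0) hux.le
    calc f (u x) ≤ ((N:ℝ) / (N - p)) * φ (u x) := h1
      _ ≤ c := by
          apply mul_le_mul_of_nonneg_left h2
          positivity
  -- bound on I(t)
  have hIle : Iint f u t ≤ c * μt := by
    by_cases hInt : IntegrableOn (fun x => f (u x)) S volume
    · have h1 : Iint f u t ≤ ∫ _ in S, c := by
        apply setIntegral_mono_on hInt (integrableOn_const hSfin.ne) hSmeas hbound
      have h2 : (∫ _ in S, c) = μt * c := by
        rw [setIntegral_const, smul_eq_mul, hμt, mu, measureReal_def]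
      rw [h2] at h1
      linarith [h1]
    · have : Iint f u t = 0 := integral_undef hInt
      rw [this]
      positivity
  -- positivity of rpow terms
  have hμa : (0:ℝ) < μt ^ a := Real.rpow_pos_of_pos hμpos a
  have hμb : (0:ℝ) < μt ^ b := Real.rpow_pos_of_pos hμpos b
  -- exponent arithmetic: μt * μt^b = μt^a
  have hab : (1:ℝ) + b = a := by
    rw [ha, hb]
    field_simp
    ring
  have hμab : μt * μt ^ b = μt ^ a := by
    rw [← hab, Real.rpow_add hμpos, Real.rpow_one]
  -- second term bound
  have hc2 : ((p - N) / (N * (p - 1))) < 0 := by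
    apply div_neg_of_neg_of_pos (by linarith) (by positivity)
  have key1 : Iint f u t * μt ^ b ≤ (c * μt) * μt ^ b :=
    mul_le_mul_of_nonneg_right hIle hμb.le
  have key2 : ((p - N) / (N * (p - 1))) * ((c * μt) * μt ^ b)
      ≤ ((p - N) / (N * (p - 1))) * (Iint f u t * μt ^ b) :=
    mul_le_mul_of_nonpos_left key1 hc2.le
  have hcoef : ((p - N) / (N * (p - 1))) * ((N:ℝ) / (N - p)) = -(1 / (p - 1)) := by
    field_simp
    ring
  have hLHS : ((p - N) / (N * (p - 1))) * ((c * μt) * μt ^ b)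
      = -(1 / (p - 1)) * (φ t * μt ^ a) := by
    have : ((p - N) / (N * (p - 1))) * ((c * μt) * μt ^ b)
        = (((p - N) / (N * (p - 1))) * ((N:ℝ) / (N - p))) * (φ t * (μt * μt ^ b)) := by
      rw [hcdef]; ring
    rw [this, hcoef, hμab]
  -- W lower bound
  have hφtft : φ t ≤ f t := (hφf t ht0.le).1
  have hterm2 : -(1 / (p - 1)) * (f t * μt ^ a)
      ≤ ((p - N) / (N * (p - 1))) * (Iint f u t * μt ^ b) := by
    refine le_trans ?_ (hLHS ▸ key2)
    have h1 : φ t * μt ^ a ≤ f t * μt ^ a := mul_le_mul_of_nonneg_right hφtft hμa.le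
    have h2 : -(1 / (p - 1)) ≤ 0 := neg_nonpos.2 (by positivity)
    exact mul_le_mul_of_nonpos_left h1 h2
  have hW : f t * μt ^ a ≤ W N p f u t := by
    have hWe : W N p f u t = (p / (p - 1)) * μt ^ a * f t
        + ((p - N) / (N * (p - 1))) * (Iint f u t * μt ^ b) := by
      rw [W]; ring
    rw [hWe]
    have hcomb : (p / (p - 1)) * μt ^ a * f t + (-(1 / (p - 1)) * (f t * μt ^ a))
        = f t * μt ^ a := by
      field_simp
      ring
    linarith only [hterm2, hcomb]
  -- comparing with the target
  have hfφ₀t : φ₀ < f t := hfφ₀ t ht0.le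
  have hfa : (((N:ℝ) - p) / N) * φ₀ ≤ f t := by
    have h1 : (((N:ℝ) - p) / N) ≤ 1 := by
      rw [div_le_one hN0]; linarith
    nlinarith [hφ₀, h1, hfφ₀t]
  have hμexp : (volume Ω).toReal ^ a ≤ μt ^ a := by
    apply Real.rpow_le_rpow_of_nonpos hμpos hμle
    apply le_of_lt
    apply div_neg_of_neg_of_pos (by linarith) (by positivity)
  have hfinal : (((N:ℝ) - p) / N) * φ₀ * (volume Ω).toReal ^ a ≤ f t * μt ^ a := by
    apply mul_le_mul hfa hμexp (Real.rpow_nonneg hΩvolpos.le a) hft0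
  constructor
  · exact le_trans hfinal hW
  · have : (0:ℝ) < (((N:ℝ) - p) / N) * φ₀ := by positivity
    exact mul_pos this (Real.rpow_pos_of_pos hΩvolpos a)

end GNN
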